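/- Fix m ∈ [0,1), c ≠ 0 real, and V real, and define the cnoidal profile p : ℝ → ℝ by p(x) = (c·K(m)²/(3π²))·(V/2 − (m+1)/3 + m·sn((K(m)/π)·x|m)²). Then ∫₀^{2π} p(x) dx = 0 if and only if V = 2·E(m)/K(m) − (4 − 2m)/3. (A cnoidal wave has vanishing average over one wavelength exactly when its rescaled velocity lies on the zero-average curve.) -/

import Mathlib

open Real

/-- Incomplete elliptic integral of the first kind `F(θ|m) = ∫₀^θ ds/√(1 - m sin²s)`. -/
noncomputable def ellF (m θ : ℝ) : ℝ :=
  ∫ s in (0:ℝ)..θ, 1 / Real.sqrt (1 - m * Real.sin s ^ 2)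

/-- Complete elliptic integral of the first kind `K(m) = F(π/2|m)`. -/
noncomputable def ellK (m : ℝ) : ℝ := ellF m (π / 2)

/-- Complete elliptic integral of the second kind `E(m) = ∫₀^{π/2} √(1 - m sin²θ) dθ`. -/
noncomputable def ellE (m : ℝ) : ℝ :=
  ∫ θ in (0:ℝ)..(π / 2), Real.sqrt (1 - m * Real.sin θ ^ 2)

/-- Jacobi amplitude: the inverse function of `θ ↦ F(θ|m)`. -/
noncomputable def am (m u : ℝ) : ℝ := Function.invFun (ellF m) u

/-- Jacobi elliptic sine. -/
noncomputable def sn (m u : ℝ) : ℝ := Real.sin (am m u)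

/-- Jacobi elliptic cosine. -/
noncomputable def cn (m u : ℝ) : ℝ := Real.cos (am m u)

/-- Jacobi delta amplitude. -/
noncomputable def dn (m u : ℝ) : ℝ := Real.sqrt (1 - m * sn m u ^ 2)


open Real

/-!
Substituting `u = F(θ|m)`, which maps `[0, π]` onto `[0, 2K(m)]` with `du = dθ / √(1 - m sin²θ)`,
turns `m ∫₀^{2K} sn²` into `∫₀^π m sin²θ / √(1 - m sin²θ) dθ = ∫₀^π (1/√(1 - m sin²θ) - √(1 - m sin²θ)) dθ
= 2K(m) - 2E(m)`. Rescaling by `K(m)/π`, the average of `p` over `[0, 2π]` is a nonzero multiple of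
`V - (2E(m)/K(m) - (4 - 2m)/3)`.
-/

theorem intervalIntegral.integral_eq_two_mul_integral_half_of_symm {f : ℝ → ℝ} {b : ℝ}
    (hf : Continuous f) (hsymm : ∀ x, f (b - x) = f x) :
    ∫ x in (0:ℝ)..b, f x = 2 * ∫ x in (0:ℝ)..(b / 2), f x := by
  have hsplit := intervalIntegral.integral_add_adjacent_intervals (μ := MeasureTheory.volume)
    (hf.intervalIntegrable 0 (b / 2)) (hf.intervalIntegrable (b / 2) b)
  have hreflect := intervalIntegral.integral_comp_sub_left (a := 0) (b := b / 2) f b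
  simp only [hsymm, sub_zero, show b - b / 2 = b / 2 by ring] at hreflect
  linarith

section EllipticIntegrals

variable {m : ℝ}

theorem one_sub_mul_sin_sq_pos (hm : m < 1) (s : ℝ) : 0 < 1 - m * sin s ^ 2 := by
  rcases le_or_gt 0 m with hm0 | hm0
  · nlinarith [mul_le_mul_of_nonneg_left (sin_sq_le_one s) hm0]
  · nlinarith [sq_nonneg (sin s)]

theorem continuous_sqrt_one_sub_mul_sin_sq (m : ℝ) :
    Continuous fun s => √(1 - m * sin s ^ 2) := by
  fun_prop

theorem continuous_one_div_sqrt_one_sub_mul_sin_sq (hm : m < 1) :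
    Continuous fun s => 1 / √(1 - m * sin s ^ 2) :=
  continuous_const.div (continuous_sqrt_one_sub_mul_sin_sq m)
    fun s => (sqrt_pos.2 (one_sub_mul_sin_sq_pos hm s)).ne'

theorem hasDerivAt_ellF (hm : m < 1) (θ : ℝ) :
    HasDerivAt (ellF m) (1 / √(1 - m * sin θ ^ 2)) θ :=
  ((continuous_one_div_sqrt_one_sub_mul_sin_sq hm).integral_hasStrictDerivAt 0 θ).hasDerivAt

theorem continuous_ellF (hm : m < 1) : Continuous (ellF m) :=
  continuous_iff_continuousAt.2 fun θ => (hasDerivAt_ellF hm θ).continuousAt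

theorem ellF_zero : ellF m 0 = 0 := by
  simp [ellF]

theorem ellF_neg (θ : ℝ) : ellF m (-θ) = -ellF m θ := by
  have hreflect := intervalIntegral.integral_comp_neg (a := 0) (b := θ)
    (fun s => 1 / √(1 - m * sin s ^ 2))
  simp only [sin_neg, neg_sq, neg_zero] at hreflect
  rw [ellF, ellF, intervalIntegral.integral_symm, ← hreflect]

theorem strictMono_ellF (hm : m < 1) : StrictMono (ellF m) := by
  intro a b hab
  have hf := continuous_one_div_sqrt_one_sub_mul_sin_sq hm
  have hsplit := intervalIntegral.integral_add_adjacent_intervals (μ := MeasureTheory.volume)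
    (hf.intervalIntegrable 0 a) (hf.intervalIntegrable a b)
  have hpos : 0 < ∫ s in a..b, 1 / √(1 - m * sin s ^ 2) :=
    intervalIntegral.intervalIntegral_pos_of_pos (hf.intervalIntegrable a b)
      (fun s => div_pos one_pos (sqrt_pos.2 (one_sub_mul_sin_sq_pos hm s))) hab
  rw [ellF, ellF]
  linarith

theorem self_le_ellF (hm0 : 0 ≤ m) (hm1 : m < 1) {θ : ℝ} (hθ : 0 ≤ θ) : θ ≤ ellF m θ := by
  calc θ = ∫ _ in (0:ℝ)..θ, (1:ℝ) := by simp
    _ ≤ ellF m θ := by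
      refine intervalIntegral.integral_mono_on hθ intervalIntegrable_const
        ((continuous_one_div_sqrt_one_sub_mul_sin_sq hm1).intervalIntegrable 0 θ) fun s _ => ?_
      rw [le_div_iff₀ (sqrt_pos.2 (one_sub_mul_sin_sq_pos hm1 s)), one_mul, sqrt_le_one]
      nlinarith [sq_nonneg (sin s)]

theorem surjective_ellF (hm0 : 0 ≤ m) (hm1 : m < 1) : Function.Surjective (ellF m) := by
  intro y
  have hlow : ellF m (-|y|) ≤ y := by
    rw [ellF_neg]
    linarith [self_le_ellF hm0 hm1 (abs_nonneg y), neg_abs_le y]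
  have hhigh : y ≤ ellF m |y| := (le_abs_self y).trans (self_le_ellF hm0 hm1 (abs_nonneg y))
  obtain ⟨θ, -, hθ⟩ := intermediate_value_Icc (by linarith [abs_nonneg y])
    (continuous_ellF hm1).continuousOn ⟨hlow, hhigh⟩
  exact ⟨θ, hθ⟩

theorem ellK_pos (hm : m < 1) : 0 < ellK m := by
  simpa [ellK, ellF_zero] using strictMono_ellF hm (by positivity : (0:ℝ) < π / 2)

theorem ellF_pi (hm : m < 1) : ellF m π = 2 * ellK m :=
  intervalIntegral.integral_eq_two_mul_integral_half_of_symm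
    (continuous_one_div_sqrt_one_sub_mul_sin_sq hm) fun x => by rw [sin_pi_sub]

theorem integral_sqrt_one_sub_mul_sin_sq_zero_pi (m : ℝ) :
    ∫ θ in (0:ℝ)..π, √(1 - m * sin θ ^ 2) = 2 * ellE m :=
  intervalIntegral.integral_eq_two_mul_integral_half_of_symm
    (continuous_sqrt_one_sub_mul_sin_sq m) fun x => by rw [sin_pi_sub]

end EllipticIntegrals

section JacobiFunctions

variable {m : ℝ}

theorem ellF_am (hm0 : 0 ≤ m) (hm1 : m < 1) (u : ℝ) : ellF m (am m u) = u :=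
  Function.invFun_eq (surjective_ellF hm0 hm1 u)

theorem am_ellF (hm : m < 1) (θ : ℝ) : am m (ellF m θ) = θ :=
  Function.leftInverse_invFun (strictMono_ellF hm).injective θ

theorem continuous_am (hm0 : 0 ≤ m) (hm1 : m < 1) : Continuous (am m) := by
  have hmono : Monotone (am m) := fun u v huv => by
    rwa [← (strictMono_ellF hm1).le_iff_le, ellF_am hm0 hm1, ellF_am hm0 hm1]
  exact hmono.continuous_of_surjective fun θ => ⟨ellF m θ, am_ellF hm1 θ⟩

theorem continuous_sn (hm0 : 0 ≤ m) (hm1 : m < 1) : Continuous (sn m) :=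
  continuous_sin.comp (continuous_am hm0 hm1)

theorem sn_ellF (hm : m < 1) (θ : ℝ) : sn m (ellF m θ) = sin θ := by
  rw [sn, am_ellF hm]

theorem integral_sn_sq_zero_two_mul_ellK (hm0 : 0 ≤ m) (hm1 : m < 1) :
    ∫ u in (0:ℝ)..(2 * ellK m), sn m u ^ 2
      = ∫ θ in (0:ℝ)..π, sin θ ^ 2 * (1 / √(1 - m * sin θ ^ 2)) := by
  have hsubst := intervalIntegral.integral_comp_mul_deriv (a := 0) (b := π)
    (fun θ _ => hasDerivAt_ellF hm1 θ)
    (continuous_one_div_sqrt_one_sub_mul_sin_sq hm1).continuousOn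
    (g := fun u => sn m u ^ 2) ((continuous_sn hm0 hm1).pow 2)
  rw [ellF_zero, ellF_pi hm1] at hsubst
  simp only [Function.comp_def, sn_ellF hm1] at hsubst
  exact hsubst.symm

theorem mul_integral_sn_sq_zero_two_mul_ellK (hm0 : 0 ≤ m) (hm1 : m < 1) :
    m * ∫ u in (0:ℝ)..(2 * ellK m), sn m u ^ 2 = 2 * ellK m - 2 * ellE m := by
  have hpointwise : ∀ θ : ℝ, m * (sin θ ^ 2 * (1 / √(1 - m * sin θ ^ 2)))
      = 1 / √(1 - m * sin θ ^ 2) - √(1 - m * sin θ ^ 2) := fun θ => by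
    have hpos := one_sub_mul_sin_sq_pos hm1 θ
    field_simp
    rw [sq_sqrt hpos.le]
    ring
  rw [integral_sn_sq_zero_two_mul_ellK hm0 hm1, ← intervalIntegral.integral_const_mul,
    intervalIntegral.integral_congr fun θ _ => hpointwise θ,
    intervalIntegral.integral_sub
      ((continuous_one_div_sqrt_one_sub_mul_sin_sq hm1).intervalIntegrable _ _)
      ((continuous_sqrt_one_sub_mul_sin_sq m).intervalIntegrable _ _),
    integral_sqrt_one_sub_mul_sin_sq_zero_pi, ← ellF, ellF_pi hm1]

theorem mul_integral_sn_sq_rescaled (hm0 : 0 ≤ m) (hm1 : m < 1) :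
    m * ∫ x in (0:ℝ)..(2 * π), sn m (ellK m / π * x) ^ 2
      = 2 * π * (1 - ellE m / ellK m) := by
  have hK := (ellK_pos hm1).ne'
  have hscale : ellK m / π ≠ 0 := div_ne_zero hK pi_ne_zero
  rw [intervalIntegral.integral_comp_mul_left (fun u => sn m u ^ 2) hscale, mul_zero,
    show ellK m / π * (2 * π) = 2 * ellK m by field_simp, smul_eq_mul, mul_left_comm,
    mul_integral_sn_sq_zero_two_mul_ellK hm0 hm1]
  field_simp

end JacobiFunctions

/-- **Zero-average criterion for cnoidal waves.**  For `m ∈ [0,1)` and `c ≠ 0`, the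
cnoidal profile `p(x) = (cK(m)²/(3π²))(V/2 - (m+1)/3 + m sn((K(m)/π)x|m)²)` has
vanishing integral over one wavelength `2π` if and only if
`V = 2E(m)/K(m) - (4-2m)/3`. -/
theorem cnoidal_zero_average_iff
    (m c V : ℝ) (hm : m ∈ Set.Ico (0:ℝ) 1) (hc : c ≠ 0) :
    let p : ℝ → ℝ := fun x =>
      c * ellK m ^ 2 / (3 * π ^ 2) *
        (V / 2 - (m + 1) / 3 + m * sn m (ellK m / π * x) ^ 2)
    (∫ x in (0:ℝ)..(2 * π), p x) = 0 ↔
      V = 2 * ellE m / ellK m - (4 - 2 * m) / 3 := by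
  obtain ⟨hm0, hm1⟩ := hm
  intro p
  have hK := (ellK_pos hm1).ne'
  have hsn : IntervalIntegrable (fun x => m * sn m (ellK m / π * x) ^ 2) MeasureTheory.volume
      0 (2 * π) := by
    have hsn_cont := continuous_sn hm0 hm1
    exact Continuous.intervalIntegrable (by fun_prop) _ _
  have hintegral : ∫ x in (0:ℝ)..(2 * π), p x
      = c * ellK m ^ 2 / (3 * π ^ 2) * π * (V - (2 * ellE m / ellK m - (4 - 2 * m) / 3)) := by
    rw [intervalIntegral.integral_const_mul, intervalIntegral.integral_add intervalIntegrable_const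
      hsn, intervalIntegral.integral_const_mul, mul_integral_sn_sq_rescaled hm0 hm1,
      intervalIntegral.integral_const, smul_eq_mul]
    field_simp
    ring
  have hC : c * ellK m ^ 2 / (3 * π ^ 2) * π ≠ 0 := by positivity
  rw [hintegral, mul_eq_zero, or_iff_right hC, sub_eq_zero]
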